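/- For every finite simple graph H equipped with a proper 3-coloring c_H and containing at most one triangle (at most one 3-clique), there exists a finite simple graph H* with the following properties: (i) H* admits a proper 3-coloring; (ii) H* has exactly the same number of triangles (3-cliques) as H; and (iii) for every finite simple graph G equipped with a proper 3-coloring c_G, if G contains no colored copy of H with respect to c_G and c_H, then G contains no copy of H* (i.e., G is H*-free). -/

import Mathlib

/-!
Glue copies of `H`, one for each permutation `e` of the colours and coloured by `e ∘ cH`, along
the triangle `T` of `H` (if there is one): in the `e`-th sheet, `t ∈ T` becomes the root vertex
of colour `e (cH t)`. Then pin the colour of every vertex `a` by attaching to it private twins of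
two of the three anchors of a rigid triangle-free gadget. In a proper 3-colouring the anchors get
three distinct colours, so the colouring is `σ ∘ e ∘ cH` on the `e`-th sheet for one permutation
`σ`, and the sheet `e = σ⁻¹` is a coloured copy of `H`. The only triangle of the whole graph is
the root triangle, which is there exactly when `T` is.
-/

open SimpleGraph Function

namespace Finset

theorem exists_map_eq_of_coe_subset_range {α β : Type*} (f : α ↪ β) {s : Finset β}
    (hs : ↑s ⊆ Set.range f) : ∃ t : Finset α, t.map f = s := by
  classical
  refine ⟨s.preimage f f.injective.injOn, ?_⟩
  ext x
  simp only [mem_map, mem_preimage]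
  refine ⟨fun ⟨a, ha, hax⟩ => hax ▸ ha, fun hx => ?_⟩
  obtain ⟨a, rfl⟩ := hs hx
  exact ⟨a, hx, rfl⟩

end Finset

namespace Equiv

theorem eq_apply_of_forall_ne {α β : Type*} {σ : α ≃ β} {x : β} {j : α}
    (h : ∀ j' ≠ j, x ≠ σ j') : x = σ j := by
  by_contra hx
  refine h (σ.symm x) (fun h' => hx ?_) (σ.apply_symm_apply x).symm
  rw [← h', σ.apply_symm_apply]

end Equiv

namespace SimpleGraph

variable {α β : Type*} {G : SimpleGraph α} {G' : SimpleGraph β}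

theorem IsNClique.exists_adj_adj_adj_of_mem {s : Finset α} (hs : G.IsNClique 3 s) {x : α}
    (hx : x ∈ s) : ∃ y z, G.Adj x y ∧ G.Adj x z ∧ G.Adj y z := by
  classical
  obtain ⟨y, z, hne, hyz⟩ := Finset.card_eq_two.1 <| by
    rw [Finset.card_erase_of_mem hx, hs.card_eq]
  have hy : y ∈ s.erase x := hyz ▸ Finset.mem_insert_self y {z}
  have hz : z ∈ s.erase x := hyz ▸ Finset.mem_insert_of_mem (Finset.mem_singleton_self z)
  rw [Finset.mem_erase] at hy hz
  exact ⟨y, z, hs.1 hx hy.2 hy.1.symm, hs.1 hx hz.2 hz.1.symm, hs.1 hy.2 hz.2 hne⟩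

theorem Embedding.isNClique_map_iff (f : G ↪g G') {n : ℕ} {s : Finset α} :
    G'.IsNClique n (s.map f.toEmbedding) ↔ G.IsNClique n s := by
  simp [isNClique_iff, IsClique, Set.Pairwise, f.map_adj_iff]

theorem Embedding.ncard_setOf_isNClique_eq (f : G ↪g G') {n : ℕ}
    (hf : ∀ s, G'.IsNClique n s → ↑s ⊆ Set.range f) :
    {s | G'.IsNClique n s}.ncard = {s | G.IsNClique n s}.ncard := by
  have : {s | G'.IsNClique n s} = Finset.map f.toEmbedding '' {s | G.IsNClique n s} := by
    ext s
    refine ⟨fun hs => ?_, ?_⟩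
    · obtain ⟨t, rfl⟩ := Finset.exists_map_eq_of_coe_subset_range f.toEmbedding (hf s hs)
      exact ⟨t, f.isNClique_map_iff.1 hs, rfl⟩
    · rintro ⟨t, ht, rfl⟩
      exact f.isNClique_map_iff.2 ht
  rw [this, Set.ncard_image_of_injective _ (Finset.map_injective _)]

end SimpleGraph

namespace ColoredFree

def gadgetEdges : List (Fin 10 × Fin 10) :=
  [(0, 3), (0, 6), (0, 7), (0, 8), (1, 4), (1, 5), (1, 8), (2, 3), (2, 5), (2, 9), (3, 4), (4, 6),
    (4, 9), (5, 6), (5, 7), (7, 9), (8, 9)]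

def gadget : SimpleGraph (Fin 10) := fromRel fun i j => (i, j) ∈ gadgetEdges

instance : DecidableRel gadget.Adj := fun _ _ => inferInstanceAs (Decidable (_ ∧ _))

def anchor (j : Fin 3) : Fin 10 := Fin.castLE (by norm_num) j

theorem gadget_adj_of_mem : ∀ p ∈ gadgetEdges, gadget.Adj p.1 p.2 := by decide

theorem gadget_triangle_free {i j k : Fin 10} :
    gadget.Adj i j → gadget.Adj j k → gadget.Adj i k → False := by
  revert i j k; decide

def gadgetColoring : gadget.Coloring (Fin 3) :=
  Coloring.mk ![0, 1, 2, 1, 0, 0, 1, 2, 2, 1] (by decide)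

@[simp]
theorem gadgetColoring_anchor (j : Fin 3) : gadgetColoring (anchor j) = j := by
  revert j; decide

-- If two anchors share a colour, the colours propagate along 2-coloured paths until some vertex
-- sees all three.
theorem injective_comp_anchor (c : gadget.Coloring (Fin 3)) : Injective (c ∘ anchor) := by
  have hc : ∀ p ∈ gadgetEdges, c p.1 ≠ c p.2 := fun p hp => c.valid (gadget_adj_of_mem p hp)
  simp only [gadgetEdges, List.forall_mem_cons, List.not_mem_nil, IsEmpty.forall_iff,
    implies_true, and_true] at hc
  intro i j hij
  fin_cases i <;> fin_cases j <;>
    simp only [comp_apply, anchor, Fin.isValue, Fin.reduceFinMk, Fin.reduceCastLE] at hij ⊢ <;> omega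

section Forcing

variable {α : Type*} (K : SimpleGraph α) (κ : K.Coloring (Fin 3))

/-- `inr (inl z)` is the gadget vertex `z`; `inr (inr (j, a))` is a twin of `anchor j`, adjacent
to `a` unless `j = κ a`. -/
def forcingExt : SimpleGraph (α ⊕ Fin 10 ⊕ Fin 3 × α) where
  Adj
    | .inl a, .inl b => K.Adj a b
    | .inr (.inl z), .inr (.inl z') => gadget.Adj z z'
    | .inr (.inr (j, _)), .inr (.inl z) | .inr (.inl z), .inr (.inr (j, _)) =>
      gadget.Adj (anchor j) z
    | .inr (.inr (j, a)), .inl b | .inl b, .inr (.inr (j, a)) => a = b ∧ j ≠ κ a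
    | _, _ => False
  symm := ⟨by
    rintro (a | z | ⟨j, a⟩) (b | z' | ⟨j', b⟩) h <;> first | exact h | simp_all [adj_comm]⟩
  loopless := ⟨by rintro (a | z | ⟨j, a⟩) h <;> simp_all⟩

variable {K κ}

def baseEmbedding : K ↪g forcingExt K κ := ⟨Embedding.inl, Iff.rfl⟩

def gadgetHom : gadget →g forcingExt K κ where
  toFun z := .inr (.inl z)
  map_rel' h := h

def twinHom (j : Fin 3) (a : α) : gadget →g forcingExt K κ where
  toFun z := if z = anchor j then .inr (.inr (j, a)) else .inr (.inl z)
  map_rel' {z z'} h := by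
    by_cases hz : z = anchor j <;> by_cases hz' : z' = anchor j <;>
      simp only [hz, hz', ite_true, ite_false]
    · exact (h.ne (hz.trans hz'.symm)).elim
    · subst hz; exact h
    · subst hz'; exact h.symm
    · exact h

def forcingExtColoring : (forcingExt K κ).Coloring (Fin 3) :=
  Coloring.mk (Sum.elim κ (Sum.elim gadgetColoring Prod.fst)) <| by
    rintro (a | z | ⟨j, a⟩) (b | z' | ⟨j', b⟩) h <;>
      simp only [forcingExt, ne_eq, Sum.elim_inl, Sum.elim_inr] at h ⊢
    · exact κ.valid h
    · exact h.1 ▸ Ne.symm h.2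
    · exact gadgetColoring.valid h
    · simpa using (gadgetColoring.valid h).symm
    · exact h.1 ▸ h.2
    · simpa using gadgetColoring.valid h

theorem exists_perm_coloring_inl (c : (forcingExt K κ).Coloring (Fin 3)) :
    ∃ σ : Equiv.Perm (Fin 3), ∀ a, c (.inl a) = σ (κ a) := by
  set σ := Equiv.ofBijective (fun j => c (.inr (.inl (anchor j))))
    (injective_comp_anchor (c.comp gadgetHom)).bijective_of_finite
  have twin : ∀ j a, c (.inr (.inr (j, a))) = σ j := by
    intro j a
    refine Equiv.eq_apply_of_forall_ne fun j' hj' => ?_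
    have hne := (injective_comp_anchor (c.comp (twinHom j a))).ne hj'.symm
    simpa [twinHom, anchor, σ, hj'] using hne
  refine ⟨σ, fun a => Equiv.eq_apply_of_forall_ne fun j hj => ?_⟩
  rw [← twin j a]
  exact c.valid ⟨rfl, hj⟩

theorem forcingExt_triangle_subset_range {s : Finset (α ⊕ Fin 10 ⊕ Fin 3 × α)}
    (hs : (forcingExt K κ).IsNClique 3 s) :
    (s : Set (α ⊕ Fin 10 ⊕ Fin 3 × α)) ⊆ Set.range Sum.inl := by
  rintro x hx
  obtain ⟨y, z, hxy, hxz, hyz⟩ := hs.exists_adj_adj_adj_of_mem hx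
  rcases x with a | i | ⟨j, a⟩ <;> rcases y with b | i' | ⟨j', b⟩ <;>
    rcases z with c | i'' | ⟨j'', c⟩ <;>
    simp only [forcingExt, ne_eq, Set.mem_range, Sum.inl.injEq, exists_eq, reduceCtorEq,
      exists_false] at *
  · exact gadget_triangle_free hxy hyz hxz
  · exact gadget_triangle_free hxz hxy hyz
  · exact gadget_triangle_free hxy hxz hyz
  · exact hyz.ne (hxy.1.symm.trans hxz.1)
  · exact gadget_triangle_free hxy hyz hxz

end Forcing

section Gluing

variable {V : Type*} [DecidableEq V] {H : SimpleGraph V} (c : H.Coloring (Fin 3)) (T : Finset V)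

/-- The `e`-th copy of `H`: the copies are glued along `T`, whose vertices become the roots
`inl i`, coloured `i`. -/
def sheet (e : Equiv.Perm (Fin 3)) (v : V) : Fin 3 ⊕ V × Equiv.Perm (Fin 3) :=
  if v ∈ T then .inl (e (c v)) else .inr (v, e)

theorem sheet_ne_of_adj (e : Equiv.Perm (Fin 3)) {u w : V} (h : H.Adj u w) :
    sheet c T e u ≠ sheet c T e w := by
  unfold sheet; split_ifs <;> simp [h.ne, c.valid h]

def glued : SimpleGraph (Fin 3 ⊕ V × Equiv.Perm (Fin 3)) where
  Adj x y := ∃ e u w, H.Adj u w ∧ sheet c T e u = x ∧ sheet c T e w = y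
  symm := ⟨fun _ _ ⟨e, u, w, h, hu, hw⟩ => ⟨e, w, u, h.symm, hw, hu⟩⟩
  loopless := ⟨fun _ ⟨e, _, _, h, hu, hw⟩ => sheet_ne_of_adj c T e h (hu.trans hw.symm)⟩

def gluedColoring : (glued c T).Coloring (Fin 3) :=
  Coloring.mk (Sum.elim id fun p => p.2 (c p.1)) <| by
    rintro _ _ ⟨e, u, w, h, rfl, rfl⟩
    unfold sheet
    split_ifs <;> simpa using c.valid h

@[simp]
theorem gluedColoring_sheet (e : Equiv.Perm (Fin 3)) (v : V) :
    gluedColoring c T (sheet c T e v) = e (c v) := by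
  unfold sheet; split_ifs <;> rfl

variable {c T}

theorem sheet_of_mem {e : Equiv.Perm (Fin 3)} {v : V} (hv : v ∈ T) :
    sheet c T e v = .inl (e (c v)) :=
  if_pos hv

theorem sheet_of_notMem {e : Equiv.Perm (Fin 3)} {v : V} (hv : v ∉ T) :
    sheet c T e v = .inr (v, e) :=
  if_neg hv

theorem sheet_eq_inr_iff {e e' : Equiv.Perm (Fin 3)} {u v : V} :
    sheet c T e u = .inr (v, e') ↔ u = v ∧ e = e' ∧ v ∉ T := by
  unfold sheet; split_ifs with hu <;> aesop

theorem sheet_injective (hT : H.IsClique T) (e : Equiv.Perm (Fin 3)) :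
    Injective (sheet c T e) := by
  intro u w huw
  unfold sheet at huw
  split_ifs at huw with hu hw hw
  · by_contra hne
    exact c.valid (hT hu hw hne) (e.injective (Sum.inl.inj huw))
  · exact (Prod.mk.inj (Sum.inr.inj huw)).1

theorem adj_sheet_iff (hT : H.IsClique T) {e : Equiv.Perm (Fin 3)} {u w : V} :
    (glued c T).Adj (sheet c T e u) (sheet c T e w) ↔ H.Adj u w := by
  refine ⟨fun hadj => ?_, fun h => ⟨e, u, w, h, rfl, rfl⟩⟩
  have outside : ∀ {u w}, (glued c T).Adj (sheet c T e u) (sheet c T e w) → u ∉ T →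
      H.Adj u w := by
    rintro u w ⟨e', u', w', h, hu, hw⟩ huT
    rw [sheet_of_notMem huT, sheet_eq_inr_iff] at hu
    obtain ⟨rfl, rfl, -⟩ := hu
    rwa [← sheet_injective hT e' hw]
  by_cases hu : u ∈ T
  · by_cases hw : w ∈ T
    · exact hT hu hw fun huw => hadj.ne (congrArg _ huw)
    · exact (outside hadj.symm hw).symm
  · exact outside hadj hu

def sheetEmbedding (hT : H.IsClique T) (e : Equiv.Perm (Fin 3)) : H ↪g glued c T :=
  ⟨⟨sheet c T e, sheet_injective hT e⟩, adj_sheet_iff hT⟩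

theorem glued_triangle_subset_range (hT : T = ∅ ∨ H.IsNClique 3 T)
    (huniq : ∀ S, H.IsNClique 3 S → S = T)
    {s : Finset (Fin 3 ⊕ V × Equiv.Perm (Fin 3))} (hs : (glued c T).IsNClique 3 s) :
    ↑s ⊆ Set.range (sheet c T 1) := by
  have hTc : H.IsClique T := hT.elim (fun h => by simp [h]) (·.isClique)
  intro x hx
  obtain ⟨y, -, ⟨e, u, w, -, rfl, -⟩, -, -⟩ := hs.exists_adj_adj_adj_of_mem hx
  by_cases hu : u ∈ T
  · have hT3 : H.IsNClique 3 T := hT.resolve_left (Finset.ne_empty_of_mem hu)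
    obtain ⟨t, ht, hct⟩ := c.surjOn_of_card_le_isClique hT3.isClique (by simp [hT3.card_eq])
      (Set.mem_univ (e (c u)))
    exact ⟨t, by rw [sheet_of_mem ht, sheet_of_mem hu, ← hct]; rfl⟩
  -- A triangle through a non-root vertex of the `e`-th sheet lies in that sheet, so it comes from
  -- a triangle of `H` through a vertex outside `T`.
  · have hsub : ↑s ⊆ Set.range (sheet c T e) := by
      intro z hz
      by_cases hzx : z = sheet c T e u
      · exact ⟨u, hzx.symm⟩
      · obtain ⟨e', u', w', -, hu', hw'⟩ := hs.1 hx hz (Ne.symm hzx)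
        rw [sheet_of_notMem hu, sheet_eq_inr_iff] at hu'
        obtain ⟨rfl, rfl, -⟩ := hu'
        exact ⟨w', hw'⟩
    obtain ⟨S, rfl⟩ :=
      Finset.exists_map_eq_of_coe_subset_range (sheetEmbedding hTc e).toEmbedding hsub
    have huS : u ∈ S := (Finset.mem_map' _).1 hx
    exact (hu (huniq S ((sheetEmbedding hTc e).isNClique_map_iff.1 hs) ▸ huS)).elim

end Gluing

end ColoredFree

open ColoredFree in
theorem colored_free_to_subgraph_free {V : Type} [Fintype V] (H : SimpleGraph V)
    (cH : H.Coloring (Fin 3))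
    (hH : ∀ T₁ T₂ : Finset V, H.IsNClique 3 T₁ → H.IsNClique 3 T₂ → T₁ = T₂) :
    ∃ (W : Type) (_ : Fintype W) (Hstar : SimpleGraph W),
      Hstar.Colorable 3 ∧
      {T : Finset W | Hstar.IsNClique 3 T}.ncard
        = {T : Finset V | H.IsNClique 3 T}.ncard ∧
      ∀ (U : Type) [Fintype U] (G : SimpleGraph U) (cG : G.Coloring (Fin 3)),
        (¬ ∃ φ : H →g G, Function.Injective φ ∧ ∀ v, cG (φ v) = cH v) →
        ¬ ∃ ψ : Hstar →g G, Function.Injective ψ := by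
  classical
  obtain ⟨T, hT, huniq⟩ : ∃ T : Finset V, (T = ∅ ∨ H.IsNClique 3 T) ∧
      ∀ S, H.IsNClique 3 S → S = T := by
    by_cases h : ∃ S, H.IsNClique 3 S
    · obtain ⟨S, hS⟩ := h
      exact ⟨S, .inr hS, fun S' hS' => hH S' S hS' hS⟩
    · exact ⟨∅, .inl rfl, fun S hS => (h ⟨S, hS⟩).elim⟩
  have hTc : H.IsClique T := hT.elim (fun h => by simp [h]) (·.isClique)
  refine ⟨_, inferInstance, forcingExt (glued cH T) (gluedColoring cH T),
    forcingExtColoring.colorable, ?_, ?_⟩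
  · rw [baseEmbedding.ncard_setOf_isNClique_eq, (sheetEmbedding hTc 1).ncard_setOf_isNClique_eq]
    · exact fun s hs => glued_triangle_subset_range hT huniq hs
    · exact fun s hs => forcingExt_triangle_subset_range hs
  · rintro U _ G cG hfree ⟨ψ, hψ⟩
    obtain ⟨σ, hσ⟩ := exists_perm_coloring_inl (cG.comp ψ)
    let φ : H ↪g forcingExt (glued cH T) (gluedColoring cH T) :=
      baseEmbedding.comp (sheetEmbedding hTc σ⁻¹)
    refine hfree ⟨ψ.comp φ.toHom, hψ.comp φ.injective, fun v => ?_⟩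
    show cG (ψ (.inl (sheet cH T σ⁻¹ v))) = cH v
    simpa using hσ (sheet cH T σ⁻¹ v)
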